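/- arXiv:2402.01526 — 2 statements merged into one kernel-verified Lean document; each statement's English description precedes it below -/
import Mathlib

section
/- Let x_0, ..., x_r > 0 and suppose that for every i one has |x_i/x_0 − 1| ≤ δ for some 0 ≤ δ < 1. Then the global average weight ω = (r+1)² / ((∑ x_i)(∑ 1/x_i)) satisfies ω ≥ 1 − C δ² for a constant C depending only on r and an upper bound on 1/(1−δ) (e.g., one may take ω ≥ 1 − (r+1)² δ²/(1−δ)). -/
/-!
Write `N` for the number of indicators and `S = (∑ xᵢ)(∑ 1/xᵢ) = ∑ᵢ ∑ⱼ xᵢ/xⱼ`, so that `ω = N²/S`.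
Pairing `xᵢ/xⱼ` with `xⱼ/xᵢ` writes `2S` as a sum of `N²` values `t + 1/t`, where every ratio
`t` lies in `[1/m, m]` for `m = (1+δ)/(1-δ)`. There `t + 1/t ≤ m + 1/m = 2(1+δ²)/(1-δ²)`, so
`ω ≥ (1-δ²)/(1+δ²) = 1 - 2δ²/(1+δ²)`, which dominates `1 - N²δ²/(1-δ)` as soon as `N ≥ 2`;
for `N = 1` simply `ω = 1`.
-/

open Finset

noncomputable def globalAverageWeight {ι : Type*} [Fintype ι] (x : ι → ℝ) : ℝ :=
  (Fintype.card ι : ℝ) ^ 2 / ((∑ i, x i) * ∑ i, (x i)⁻¹)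

theorem add_inv_le_add_inv_of_le {m t : ℝ} (ht : 0 < t) (htm : t ≤ m) (htm' : t⁻¹ ≤ m) :
    t + t⁻¹ ≤ m + m⁻¹ := by
  have hm : 0 < m := ht.trans_le htm
  have key : 0 ≤ (m - t) * (m - t⁻¹) := mul_nonneg (by linarith) (by linarith)
  have ht' : t * t⁻¹ = 1 := mul_inv_cancel₀ ht.ne'
  have hm' : m * m⁻¹ = 1 := mul_inv_cancel₀ hm.ne'
  nlinarith

theorem div_le_of_abs_div_sub_one_le {a p q δ : ℝ} (ha : 0 < a) (hδ : δ < 1)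
    (hp : |p / a - 1| ≤ δ) (hq : |q / a - 1| ≤ δ) : p / q ≤ (1 + δ) / (1 - δ) := by
  have hp' := (abs_le.1 hp).2
  have hq' := (abs_le.1 hq).1
  calc p / q = (p / a) / (q / a) := by rw [div_div_div_cancel_right₀ ha.ne']
    _ ≤ (1 + δ) / (1 - δ) :=
      div_le_div₀ (by linarith [abs_nonneg (p / a - 1)]) (by linarith) (by linarith) (by linarith)

theorem two_mul_sum_mul_sum_inv {ι : Type*} [Fintype ι] (x : ι → ℝ) :
    2 * ((∑ i, x i) * ∑ i, (x i)⁻¹) = ∑ i, ∑ j, (x i / x j + x j / x i) := by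
  simp only [sum_add_distrib, div_eq_mul_inv, ← sum_mul_sum]
  rw [sum_comm (f := fun i j => x j * (x i)⁻¹), ← sum_mul_sum]
  ring

theorem sum_mul_sum_inv_le {ι : Type*} [Fintype ι] {x : ι → ℝ} (hx : ∀ i, 0 < x i) {m : ℝ}
    (hm : ∀ i j, x i / x j ≤ m) :
    (∑ i, x i) * ∑ i, (x i)⁻¹ ≤ (Fintype.card ι : ℝ) ^ 2 * ((m + m⁻¹) / 2) := by
  have hpair : ∀ i j, x i / x j + x j / x i ≤ m + m⁻¹ := fun i j => by
    simpa only [inv_div] using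
      add_inv_le_add_inv_of_le (div_pos (hx i) (hx j)) (hm i j) (by rw [inv_div]; exact hm j i)
  have hsum : ∑ i, ∑ j, (x i / x j + x j / x i) ≤ ∑ _i : ι, ∑ _j : ι, (m + m⁻¹) :=
    sum_le_sum fun i _ => sum_le_sum fun j _ => hpair i j
  simp only [sum_const, card_univ, nsmul_eq_mul] at hsum
  linarith [two_mul_sum_mul_sum_inv x]

theorem one_sub_sq_div_one_add_sq_le_globalAverageWeight {ι : Type*} [Fintype ι]
    {x : ι → ℝ} (hx : ∀ i, 0 < x i) {δ : ℝ} (hδ : δ < 1) (i₀ : ι)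
    (hrel : ∀ i, |x i / x i₀ - 1| ≤ δ) :
    (1 - δ ^ 2) / (1 + δ ^ 2) ≤ globalAverageWeight x := by
  have h1δ : 0 < 1 - δ := by linarith
  have h1δ' : 0 < 1 + δ := by linarith [abs_nonneg (x i₀ / x i₀ - 1), hrel i₀]
  have hS : (∑ i, x i) * ∑ i, (x i)⁻¹ ≤ (Fintype.card ι : ℝ) ^ 2 * ((1 + δ ^ 2) / (1 - δ ^ 2)) := by
    have hm := sum_mul_sum_inv_le hx fun i j =>
      div_le_of_abs_div_sub_one_le (hx i₀) hδ (hrel i) (hrel j)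
    have hmid : ((1 + δ) / (1 - δ) + ((1 + δ) / (1 - δ))⁻¹) / 2 = (1 + δ ^ 2) / (1 - δ ^ 2) := by
      rw [inv_div, div_add_div _ _ h1δ.ne' h1δ'.ne', (by ring : 1 - δ ^ 2 = (1 - δ) * (1 + δ))]
      field_simp
      ring
    rwa [hmid] at hm
  have hSpos : 0 < (∑ i, x i) * ∑ i, (x i)⁻¹ :=
    mul_pos (sum_pos (fun i _ => hx i) ⟨i₀, mem_univ _⟩)
      (sum_pos (fun i _ => inv_pos.2 (hx i)) ⟨i₀, mem_univ _⟩)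
  unfold globalAverageWeight
  rw [le_div_iff₀ hSpos]
  calc (1 - δ ^ 2) / (1 + δ ^ 2) * ((∑ i, x i) * ∑ i, (x i)⁻¹)
      ≤ (1 - δ ^ 2) / (1 + δ ^ 2) * ((Fintype.card ι : ℝ) ^ 2 * ((1 + δ ^ 2) / (1 - δ ^ 2))) :=
        mul_le_mul_of_nonneg_left hS (div_nonneg (by nlinarith) (by positivity))
    _ = (Fintype.card ι : ℝ) ^ 2 := by
        field_simp [(by nlinarith : (1 : ℝ) - δ ^ 2 ≠ 0)]

theorem one_sub_sq_div_le_of_two_le {N δ : ℝ} (hN : 2 ≤ N) (hδ : δ < 1) :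
    1 - N ^ 2 * δ ^ 2 / (1 - δ) ≤ (1 - δ ^ 2) / (1 + δ ^ 2) := by
  have h1δ : 0 < 1 - δ := by linarith
  have hgap : 1 - (1 - δ ^ 2) / (1 + δ ^ 2) = 2 * δ ^ 2 / (1 + δ ^ 2) := by
    field_simp
    ring
  rw [sub_le_comm, hgap, div_le_div_iff₀ (by positivity) h1δ]
  have hN2 : 4 ≤ N ^ 2 := by nlinarith
  nlinarith [mul_nonneg (sq_nonneg δ) (sq_nonneg δ), mul_nonneg (sq_nonneg δ) (sq_nonneg (δ + 1)),
    mul_nonneg (mul_nonneg (sq_nonneg δ) (by positivity : (0 : ℝ) ≤ 1 + δ ^ 2)) (sub_nonneg.2 hN2)]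

theorem globalAverageWeight_of_unique {ι : Type*} [Fintype ι] [Unique ι] {x : ι → ℝ}
    (hx : x default ≠ 0) : globalAverageWeight x = 1 := by
  simp [globalAverageWeight, mul_inv_cancel₀ hx]

theorem global_average_weight_near_one_general (r : ℕ) (x : Fin (r + 1) → ℝ)
    (hx : ∀ i, 0 < x i) (δ : ℝ) (hδ1 : δ < 1)
    (hrel : ∀ i, |x i / x 0 - 1| ≤ δ) :
    1 - ((r : ℝ) + 1) ^ 2 * δ ^ 2 / (1 - δ) ≤
      ((r : ℝ) + 1) ^ 2 / ((∑ i, x i) * (∑ i, (x i)⁻¹)) := by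
  have hω : ((r : ℝ) + 1) ^ 2 / ((∑ i, x i) * ∑ i, (x i)⁻¹) = globalAverageWeight x := by
    simp [globalAverageWeight]
  rw [hω]
  rcases r with _ | r
  · have : Unique (Fin (0 + 1)) := Fin.instUnique
    rw [globalAverageWeight_of_unique (hx _).ne']
    have : 0 ≤ ((0 : ℕ) + 1 : ℝ) ^ 2 * δ ^ 2 / (1 - δ) := div_nonneg (by positivity) (by linarith)
    linarith
  · have hN : (2 : ℝ) ≤ (↑(r + 1) : ℝ) + 1 := by push_cast; linarith [r.cast_nonneg (α := ℝ)]
    exact (one_sub_sq_div_le_of_two_le hN hδ1).trans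
      (one_sub_sq_div_one_add_sq_le_globalAverageWeight hx hδ1 0 hrel)

theorem global_average_weight_near_one (r : ℕ) (x : Fin (r + 1) → ℝ)
    (hx : ∀ i, 0 < x i) (δ : ℝ) (hδ0 : 0 ≤ δ) (hδ1 : δ < 1)
    (hrel : ∀ i, |x i / x 0 - 1| ≤ δ) :
    1 - ((r : ℝ) + 1) ^ 2 * δ ^ 2 / (1 - δ) ≤
      ((r : ℝ) + 1) ^ 2 / ((∑ i, x i) * (∑ i, (x i)⁻¹)) :=
  global_average_weight_near_one_general r x hx δ hδ1 hrel
end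

section
/- For any degree-4 polynomial f over ℝ, any h > 0, any x_j ∈ ℝ and any τ ∈ ℝ, if f_{j+l} = (1/h)∫ from x_j+(l−1/2)h to x_j+(l+1/2)h of f for l = −2,...,2, then ((9+200τ−120τ²−160τ³+80τ⁴)/1920)f_{j−2} + ((−29−340τ+360τ²+80τ³−80τ⁴)/480)f_{j−1} + ((1067−1320τ²+240τ⁴)/960)f_j + ((−29+340τ+360τ²−80τ³−80τ⁴)/480)f_{j+1} + ((9−200τ−120τ²+160τ³+80τ⁴)/1920)f_{j+2} = f(x_j + τh). -/
/-! The substitution x = xj + s h turns the five cell averages of f into the integrals of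
g(s) = f(xj + s h) over the unit cells [l - 1/2, l + 1/2], and g again has degree at most 4.
For h = 1 both sides are linear in the five coefficients of g, and integrating monomials
turns the claim into a polynomial identity in τ. -/

open Polynomial intervalIntegral

theorem integral_eval_eq_sum_range {p : ℝ[X]} {N : ℕ} (hN : p.natDegree < N) (a b : ℝ) :
    ∫ x in a..b, p.eval x =
      ∑ n ∈ Finset.range N, p.coeff n * ((b ^ (n + 1) - a ^ (n + 1)) / (n + 1)) := by
  simp_rw [eval_eq_sum_range' hN]
  rw [integral_finsetSum fun n _ => (continuous_pow n).intervalIntegrable a b |>.const_mul _]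
  simp only [integral_const_mul, integral_pow]

theorem one_div_mul_integral_eq_integral_comp (u : ℝ → ℝ) {h : ℝ} (hh : h ≠ 0) (a l r : ℝ) :
    (1 / h) * ∫ x in a + l * h..a + r * h, u x = ∫ s in l..r, u (a + s * h) := by
  simp_rw [mul_comm _ h]
  rw [integral_comp_add_mul u hh, smul_eq_mul, one_div]

theorem natDegree_comp_C_add_X_mul_C_le {R : Type*} [Semiring R] (p : R[X]) (a b : R) :
    (p.comp (C a + X * C b)).natDegree ≤ p.natDegree := by
  have h_affine : (C a + X * C b).natDegree ≤ 1 := by compute_degree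
  calc (p.comp (C a + X * C b)).natDegree ≤ p.natDegree * (C a + X * C b).natDegree :=
        natDegree_comp_le
    _ ≤ p.natDegree * 1 := Nat.mul_le_mul_left _ h_affine
    _ = p.natDegree := mul_one _

theorem five_cell_reconstruction_exact_of_unit_width {p : ℝ[X]} (hp : p.natDegree ≤ 4) (τ : ℝ) :
    ((9 + 200*τ - 120*τ^2 - 160*τ^3 + 80*τ^4)/1920) *
        (∫ s in (-2 - 1/2)..(-2 + 1/2), p.eval s)
      + ((-29 - 340*τ + 360*τ^2 + 80*τ^3 - 80*τ^4)/480) *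
        (∫ s in (-1 - 1/2)..(-1 + 1/2), p.eval s)
      + ((1067 - 1320*τ^2 + 240*τ^4)/960) *
        (∫ s in (0 - 1/2)..(0 + 1/2), p.eval s)
      + ((-29 + 340*τ + 360*τ^2 - 80*τ^3 - 80*τ^4)/480) *
        (∫ s in (1 - 1/2)..(1 + 1/2), p.eval s)
      + ((9 - 200*τ - 120*τ^2 + 160*τ^3 + 80*τ^4)/1920) *
        (∫ s in (2 - 1/2)..(2 + 1/2), p.eval s)
      = p.eval τ := by
  have hN : p.natDegree < 5 := Nat.lt_succ_of_le hp
  simp only [integral_eval_eq_sum_range hN]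
  rw [eval_eq_sum_range' hN]
  simp only [Finset.sum_range_succ, Finset.sum_range_zero]
  norm_num
  ring

open intervalIntegral in
theorem full_five_cell_reconstruction_exact (f : Polynomial ℝ)
    (hf : f.degree ≤ 4) (h : ℝ) (hh : 0 < h) (xj τ : ℝ) :
    ((9 + 200*τ - 120*τ^2 - 160*τ^3 + 80*τ^4)/1920) *
        ((1/h) * ∫ x in (xj + (-2 - 1/2)*h)..(xj + (-2 + 1/2)*h), f.eval x)
      + ((-29 - 340*τ + 360*τ^2 + 80*τ^3 - 80*τ^4)/480) *
        ((1/h) * ∫ x in (xj + (-1 - 1/2)*h)..(xj + (-1 + 1/2)*h), f.eval x)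
      + ((1067 - 1320*τ^2 + 240*τ^4)/960) *
        ((1/h) * ∫ x in (xj + (0 - 1/2)*h)..(xj + (0 + 1/2)*h), f.eval x)
      + ((-29 + 340*τ + 360*τ^2 - 80*τ^3 - 80*τ^4)/480) *
        ((1/h) * ∫ x in (xj + (1 - 1/2)*h)..(xj + (1 + 1/2)*h), f.eval x)
      + ((9 - 200*τ - 120*τ^2 + 160*τ^3 + 80*τ^4)/1920) *
        ((1/h) * ∫ x in (xj + (2 - 1/2)*h)..(xj + (2 + 1/2)*h), f.eval x)
      = f.eval (xj + τ * h) := by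
  set g := f.comp (C xj + X * C h)
  have eval_g (s : ℝ) : g.eval s = f.eval (xj + s * h) := by simp [g, mul_comm s h]
  have natDegree_g : g.natDegree ≤ 4 :=
    (natDegree_comp_C_add_X_mul_C_le f xj h).trans (natDegree_le_iff_degree_le.mpr hf)
  simp only [one_div_mul_integral_eq_integral_comp _ hh.ne', ← eval_g]
  exact five_cell_reconstruction_exact_of_unit_width natDegree_g τ
end
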